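/- Let d = 2 and let M be the 4×4 {0,1}-matrix [[0,1,1,0],[1,1,0,0],[0,0,1,1],[0,0,1,1]] (the block matrix [[G*, R],[O, E_2]] with G* = [[0,1],[1,1]], R = [[1,0],[0,0]], and E_2 the 2×2 all-ones matrix). Then h(T_M) = log 2. -/

import Mathlib

open Filter Real

/-- `treeP d M n i` = number of `n`-blocks of the hom Markov tree-shift `T_M`
on the `d`-tree whose root label is `i`. -/
def treeP (d : ℕ) {ι : Type} [Fintype ι] (M : Matrix ι ι ℕ) : ℕ → ι → ℕ
  | 0, _ => 1
  | n + 1, i => (∑ j, M i j * treeP d M n j) ^ d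

/-- `|Δ_n| = 1 + d + ⋯ + d^n`. -/
def deltaCard (d n : ℕ) : ℕ := ∑ i ∈ Finset.range (n + 1), d ^ i

/-- Topological entropy of the hom Markov tree-shift `T_M` on the `d`-tree. -/
noncomputable def treeEntropy (d : ℕ) {ι : Type} [Fintype ι] (M : Matrix ι ι ℕ) : ℝ :=
  Filter.limsup (fun n => Real.log (∑ i, treeP d M n i) / (deltaCard d n : ℝ)) Filter.atTop

/-- `M` has entries in `{0,1}`. -/
def IsBinary {ι : Type} [Fintype ι] (M : Matrix ι ι ℕ) : Prop := ∀ i j, M i j ≤ 1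

/-- `M` is irreducible. -/
def MatIrreducible {ι : Type} [Fintype ι] [DecidableEq ι] (M : Matrix ι ι ℕ) : Prop :=
  ∀ i j, ∃ n, 1 ≤ n ∧ 0 < (M ^ n) i j

/-- `M` is the block matrix `[[E_a, R],[O, E_b]]` with `R` binary of constant row sum `l`. -/
def IsMabl (a b l : ℕ) (M : Matrix (Fin (a + b)) (Fin (a + b)) ℕ) : Prop :=
  (∀ i j, M i j ≤ 1) ∧
  (∀ i j : Fin (a + b), (i : ℕ) < a → (j : ℕ) < a → M i j = 1) ∧
  (∀ i j : Fin (a + b), a ≤ (i : ℕ) → a ≤ (j : ℕ) → M i j = 1) ∧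
  (∀ i j : Fin (a + b), a ≤ (i : ℕ) → (j : ℕ) < a → M i j = 0) ∧
  (∀ i : Fin (a + b), (i : ℕ) < a → (∑ j : Fin (a + b), if a ≤ (j : ℕ) then M i j else 0) = l)

/-! If every row of `M` sums to at most `k`, induction on `n` gives `k * p_n(i) ≤ k ^ |Δ_n|`
for every root label `i`; if some nonempty set of labels has rows summing to at least `k` inside
that set, the same induction gives the reverse inequality for those labels. Then
`log p_M(n) = |Δ_n| log k + O(1)`, and dividing by `|Δ_n| → ∞` gives `h(T_M) = log k`. For the
given matrix all rows sum to `2` and the block `E_2` on the labels `{2, 3}` is such a set. -/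

theorem tendsto_div_of_abs_sub_mul_le {a D : ℕ → ℝ} {c C : ℝ} (hD : Tendsto D atTop atTop)
    (h : ∀ n, |a n - D n * c| ≤ C) : Tendsto (fun n => a n / D n) atTop (nhds c) := by
  have hpos : ∀ᶠ n in atTop, 0 < D n := hD.eventually_gt_atTop 0
  have herr : Tendsto (fun n => (a n - D n * c) / D n) atTop (nhds 0) := by
    refine squeeze_zero_norm' ?_ ((tendsto_const_nhds (x := C)).div_atTop hD)
    filter_upwards [hpos] with n hn
    rw [norm_div, Real.norm_of_nonneg hn.le]
    exact div_le_div_of_nonneg_right (h n) hn.le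
  have hsplit : ∀ᶠ n in atTop, c + (a n - D n * c) / D n = a n / D n := by
    filter_upwards [hpos] with n hn
    field_simp
    ring
  simpa using (tendsto_const_nhds.add herr).congr' hsplit

theorem deltaCard_succ (d n : ℕ) : deltaCard d (n + 1) = 1 + d * deltaCard d n := by
  simp only [deltaCard, Finset.sum_range_succ' _ (n + 1), Finset.mul_sum, pow_succ', pow_zero]
  ring

theorem pow_deltaCard_succ (k d n : ℕ) :
    k ^ deltaCard d (n + 1) = k * (k ^ deltaCard d n) ^ d := by
  rw [deltaCard_succ, pow_add, pow_one, ← pow_mul, mul_comm d]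

theorem le_deltaCard {d : ℕ} (hd : 0 < d) (n : ℕ) : n + 1 ≤ deltaCard d n := by
  simpa [deltaCard] using Finset.card_nsmul_le_sum (Finset.range (n + 1)) (d ^ ·) 1
    fun i _ => Nat.one_le_pow i d hd

theorem tendsto_deltaCard_atTop {d : ℕ} (hd : 0 < d) :
    Tendsto (fun n => (deltaCard d n : ℝ)) atTop atTop :=
  tendsto_natCast_atTop_atTop.comp <|
    tendsto_atTop_mono (le_deltaCard hd) (tendsto_add_atTop_nat 1)

section TreeShift

variable {ι : Type} [Fintype ι] {d k : ℕ} {M : Matrix ι ι ℕ}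

theorem mul_treeP_le_pow (hM : ∀ i, ∑ j, M i j ≤ k) (n : ℕ) (i : ι) :
    k * treeP d M n i ≤ k ^ deltaCard d n := by
  induction n generalizing i with
  | zero => simp [treeP, deltaCard]
  | succ n ih =>
    rw [treeP, pow_deltaCard_succ]
    rcases k.eq_zero_or_pos with rfl | hk
    · simp
    have hsum : ∑ j, M i j * treeP d M n j ≤ k ^ deltaCard d n := by
      refine Nat.le_of_mul_le_mul_left ?_ hk
      calc k * ∑ j, M i j * treeP d M n j = ∑ j, M i j * (k * treeP d M n j) := by
            rw [Finset.mul_sum]; exact Finset.sum_congr rfl fun j _ => by ring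
        _ ≤ ∑ j, M i j * k ^ deltaCard d n := by gcongr with j; exact ih j
        _ = (∑ j, M i j) * k ^ deltaCard d n := (Finset.sum_mul ..).symm
        _ ≤ k * k ^ deltaCard d n := by gcongr; exact hM i
    gcongr

theorem pow_le_mul_treeP {S : Finset ι} (hS : ∀ i ∈ S, k ≤ ∑ j ∈ S, M i j)
    (n : ℕ) {i : ι} (hi : i ∈ S) : k ^ deltaCard d n ≤ k * treeP d M n i := by
  induction n generalizing i with
  | zero => simp [treeP, deltaCard]
  | succ n ih =>
    rw [treeP, pow_deltaCard_succ]
    rcases k.eq_zero_or_pos with rfl | hk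
    · simp
    have hsum : k ^ deltaCard d n ≤ ∑ j, M i j * treeP d M n j := by
      refine Nat.le_of_mul_le_mul_left ?_ hk
      calc k * k ^ deltaCard d n ≤ (∑ j ∈ S, M i j) * k ^ deltaCard d n := by
            gcongr; exact hS i hi
        _ = ∑ j ∈ S, M i j * k ^ deltaCard d n := Finset.sum_mul ..
        _ ≤ ∑ j ∈ S, M i j * (k * treeP d M n j) := by
            gcongr with j hj; exact ih hj
        _ = k * ∑ j ∈ S, M i j * treeP d M n j := by
            rw [Finset.mul_sum]; exact Finset.sum_congr rfl fun j _ => by ring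
        _ ≤ k * ∑ j, M i j * treeP d M n j :=
            Nat.mul_le_mul_left k (Finset.sum_le_sum_of_subset S.subset_univ)
    gcongr

theorem abs_log_sum_treeP_sub_le (hk : 0 < k) (hM : ∀ i, ∑ j, M i j ≤ k) {S : Finset ι}
    (hS : ∀ i ∈ S, k ≤ ∑ j ∈ S, M i j) (hSne : S.Nonempty) (n : ℕ) :
    |log (∑ i, treeP d M n i) - deltaCard d n * log k| ≤ log k + log (Fintype.card ι) := by
  obtain ⟨i₀, hi₀⟩ := hSne
  set P := ∑ i, treeP d M n i
  have hlower : k ^ deltaCard d n ≤ k * P :=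
    (pow_le_mul_treeP hS n hi₀).trans
      (Nat.mul_le_mul_left k (Finset.single_le_sum (fun i _ => Nat.zero_le _) (Finset.mem_univ i₀)))
  have hupper : k * P ≤ Fintype.card ι * k ^ deltaCard d n := by
    rw [Finset.mul_sum]
    refine (Finset.sum_le_card_nsmul _ _ _ fun i _ => mul_treeP_le_pow hM n i).trans_eq ?_
    rw [Finset.card_univ, smul_eq_mul]
  have hP : 0 < P := Nat.pos_of_mul_pos_left (hlower.trans_lt' (pow_pos hk _))
  have hcard : 0 < Fintype.card ι := Fintype.card_pos_iff.mpr ⟨i₀⟩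
  have hlog_lower : deltaCard d n * log k ≤ log k + log P := by
    rw [← log_mul (by positivity) (by positivity), ← log_pow]
    exact log_le_log (by positivity) (by exact_mod_cast hlower)
  have hlog_upper : log k + log P ≤ log (Fintype.card ι) + deltaCard d n * log k := by
    rw [← log_mul (by positivity) (by positivity), ← log_pow,
      ← log_mul (by positivity) (by positivity)]
    exact log_le_log (by positivity) (by exact_mod_cast hupper)
  have hlogk : 0 ≤ log k := log_nonneg (by exact_mod_cast hk)
  have hlogc : 0 ≤ log (Fintype.card ι) := log_nonneg (by exact_mod_cast hcard)
  rw [← Nat.cast_sum, abs_sub_le_iff]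
  constructor <;> linarith

theorem treeEntropy_eq_log (hd : 0 < d) (hk : 0 < k) (hM : ∀ i, ∑ j, M i j ≤ k) {S : Finset ι}
    (hS : ∀ i ∈ S, k ≤ ∑ j ∈ S, M i j) (hSne : S.Nonempty) :
    treeEntropy d M = log k :=
  (tendsto_div_of_abs_sub_mul_le (tendsto_deltaCard_atTop hd)
    (abs_log_sum_treeP_sub_le hk hM hS hSne)).limsup_eq

end TreeShift

/-- **Proposition 6.1 (second part).** For `d = 2` and the block matrix
`[[G*, R],[O, E₂]]` with `G* = [[0,1],[1,1]]` and `R = [[1,0],[0,0]]`,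
the entropy equals `log 2`. -/
theorem treeEntropy_GstarRE_eq_log_two :
    treeEntropy 2 (!![0, 1, 1, 0; 1, 1, 0, 0; 0, 0, 1, 1; 0, 0, 1, 1] :
      Matrix (Fin 4) (Fin 4) ℕ) = Real.log 2 := by
  have h := treeEntropy_eq_log (d := 2) (k := 2) two_pos two_pos
    (M := !![0, 1, 1, 0; 1, 1, 0, 0; 0, 0, 1, 1; 0, 0, 1, 1]) (S := {2, 3})
    (by decide) (by decide) (Finset.insert_nonempty _ _)
  exact_mod_cast h
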